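/- For every integer n ≥ 1, if W satisfies the minimal constraints and W·ln W and the powers W^k for 1 ≤ k ≤ n+1 are integrable, then S[W] ≥ ln π + ∑_{k=1}^{n} (1/k) · (1 − μ/2)^k, where μ is the purity of W. -/

import Mathlib

/-!
With `x = π W ∈ [0, 1]`, the partial sums of `-log x = ∑_{k ≥ 1} (1 - x)^k / k` (a series of
nonnegative terms) bound `-log (π W)` from below. Weighting by `W` and integrating bounds
`S[W] - log π` below by `∑ (1/k) 𝔼[(1 - π W)^k]`, the expectation taken under the probability
density `W`. Jensen's inequality for `t ↦ t^k` then gives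
`𝔼[(1 - π W)^k] ≥ 𝔼[1 - π W]^k = (1 - π ∫ W²)^k = (1 - μ/2)^k`.
-/

open Real MeasureTheory Finset

theorem sum_Icc_one_div_mul_pow_le_neg_log_one_sub {y : ℝ} (hy0 : 0 ≤ y) (hy1 : y < 1) (n : ℕ) :
    ∑ k ∈ Icc 1 n, 1 / (k : ℝ) * y ^ k ≤ -log (1 - y) := by
  have hsum := hasSum_pow_div_log_of_abs_lt_one (abs_lt.2 ⟨by linarith, hy1⟩)
  calc ∑ k ∈ Icc 1 n, 1 / (k : ℝ) * y ^ k
      = ∑ k ∈ range n, y ^ (k + 1) / (k + 1) := by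
        rw [← Ico_add_one_right_eq_Icc, sum_Ico_eq_sum_range, add_tsub_cancel_right]
        refine sum_congr rfl fun k _ => ?_
        push_cast
        ring
    _ ≤ -log (1 - y) := sum_le_hasSum _ (fun k _ => by positivity) hsum

theorem sum_Icc_one_div_mul_mul_one_sub_mul_pow_le {c w : ℝ} (hc : 0 < c) (hw : 0 ≤ w)
    (hcw : c * w ≤ 1) (n : ℕ) :
    ∑ k ∈ Icc 1 n, 1 / (k : ℝ) * (w * (1 - c * w) ^ k) ≤ -(w * log w) - log c * w := by
  rcases hw.eq_or_lt with rfl | hw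
  · simp
  have hseries := sum_Icc_one_div_mul_pow_le_neg_log_one_sub (y := 1 - c * w)
    (by linarith) (by nlinarith) n
  rw [sub_sub_cancel, log_mul hc.ne' hw.ne'] at hseries
  calc ∑ k ∈ Icc 1 n, 1 / (k : ℝ) * (w * (1 - c * w) ^ k)
      = w * ∑ k ∈ Icc 1 n, 1 / (k : ℝ) * (1 - c * w) ^ k := by
        rw [mul_sum]; exact sum_congr rfl fun k _ => by ring
    _ ≤ w * -(log c + log w) := by gcongr
    _ = -(w * log w) - log c * w := by ring

section Density

variable {α : Type*} [MeasurableSpace α] {μ : Measure α} {w : α → ℝ}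

theorem isProbabilityMeasure_withDensity_ofReal (hw0 : ∀ᵐ x ∂μ, 0 ≤ w x) (hwi : Integrable w μ)
    (hw1 : ∫ x, w x ∂μ = 1) :
    IsProbabilityMeasure (μ.withDensity fun x => ENNReal.ofReal (w x)) := by
  constructor
  rw [withDensity_apply _ MeasurableSet.univ, setLIntegral_univ,
    ← ofReal_integral_eq_lintegral_ofReal hwi hw0, hw1, ENNReal.ofReal_one]

theorem integral_withDensity_ofReal_eq_integral_mul (hw0 : ∀ᵐ x ∂μ, 0 ≤ w x) (hwi : Integrable w μ)
    (g : α → ℝ) :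
    ∫ x, g x ∂μ.withDensity (fun x => ENNReal.ofReal (w x)) = ∫ x, w x * g x ∂μ := by
  rw [integral_withDensity_eq_integral_toReal_smul₀ hwi.aemeasurable.ennreal_ofReal
    (ae_of_all _ fun _ => ENNReal.ofReal_lt_top)]
  refine integral_congr_ae ?_
  filter_upwards [hw0] with x hx
  simp [ENNReal.toReal_ofReal hx]

theorem pow_integral_mul_le_integral_mul_pow (hw0 : ∀ᵐ x ∂μ, 0 ≤ w x) (hwi : Integrable w μ)
    (hw1 : ∫ x, w x ∂μ = 1) {f : α → ℝ} (hf : AEStronglyMeasurable f μ)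
    (hf01 : ∀ᵐ x ∂μ, f x ∈ Set.Icc (0 : ℝ) 1) (k : ℕ) :
    (∫ x, w x * f x ∂μ) ^ k ≤ ∫ x, w x * f x ^ k ∂μ := by
  set ν := μ.withDensity fun x => ENNReal.ofReal (w x)
  have := isProbabilityMeasure_withDensity_ofReal hw0 hwi hw1
  have hνμ : ν ≪ μ := withDensity_absolutelyContinuous _ _
  have hf01ν : ∀ᵐ x ∂ν, f x ∈ Set.Icc (0 : ℝ) 1 := hνμ.ae_le hf01
  have hbound : ∀ {g : α → ℝ}, AEStronglyMeasurable g μ → (∀ᵐ x ∂ν, ‖g x‖ ≤ 1) →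
      Integrable g ν := fun hg hg1 => (integrable_const 1).mono' (hg.mono_ac hνμ) hg1
  have hfi : Integrable f ν := hbound hf <| hf01ν.mono fun x hx => by
    rw [norm_eq_abs, abs_le]; exact ⟨by linarith [hx.1], hx.2⟩
  have hfki : Integrable (fun x => f x ^ k) ν := hbound (hf.pow k) <| hf01ν.mono fun x hx => by
    rw [norm_pow, norm_eq_abs, abs_of_nonneg hx.1]; exact pow_le_one₀ hx.1 hx.2
  have hjensen := ((convexOn_pow k).subset Set.Icc_subset_Ici_self (convex_Icc 0 1))
    |>.map_integral_le (continuous_pow k).continuousOn isClosed_Icc hf01ν hfi hfki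
  simpa only [ν, integral_withDensity_ofReal_eq_integral_mul hw0 hwi] using hjensen

end Density

section Entropy

variable {α : Type*} [MeasurableSpace α] {μ : Measure α} {W : α → ℝ} {c : ℝ}

theorem integrable_mul_one_sub_mul_pow (hc : 0 < c) (hW0 : ∀ᵐ x ∂μ, 0 ≤ W x)
    (hWc : ∀ᵐ x ∂μ, c * W x ≤ 1) (hWi : Integrable W μ) (k : ℕ) :
    Integrable (fun x => W x * (1 - c * W x) ^ k) μ := by
  have hmeas := hWi.aestronglyMeasurable
  refine hWi.mono' (by fun_prop) ?_
  filter_upwards [hW0, hWc] with x hx0 hxc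
  have h0 : 0 ≤ 1 - c * W x := by linarith
  have h1 : 1 - c * W x ≤ 1 := by nlinarith [mul_nonneg hc.le hx0]
  rw [norm_mul, norm_pow, norm_of_nonneg hx0, norm_of_nonneg h0]
  exact mul_le_of_le_one_right hx0 (pow_le_one₀ h0 h1)

theorem log_add_sum_le_neg_integral_mul_log (hc : 0 < c) (hW0 : ∀ᵐ x ∂μ, 0 ≤ W x)
    (hWc : ∀ᵐ x ∂μ, c * W x ≤ 1) (hWi : Integrable W μ) (hnorm : ∫ x, W x ∂μ = 1)
    (hlog : Integrable (fun x => W x * log (W x)) μ) (n : ℕ) :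
    log c + ∑ k ∈ Icc 1 n, 1 / (k : ℝ) * (1 - c * ∫ x, W x ^ 2 ∂μ) ^ k
      ≤ -∫ x, W x * log (W x) ∂μ := by
  have hterm := integrable_mul_one_sub_mul_pow hc hW0 hWc hWi
  have hmoment : ∫ x, W x * (1 - c * W x) ∂μ = 1 - c * ∫ x, W x ^ 2 ∂μ := by
    have hWsq : Integrable (fun x => c * W x ^ 2) μ :=
      (hWi.sub' (hterm 1)).congr (ae_of_all _ fun x => by ring)
    calc ∫ x, W x * (1 - c * W x) ∂μ = ∫ x, W x - c * W x ^ 2 ∂μ := by congr 1; ext x; ring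
      _ = 1 - c * ∫ x, W x ^ 2 ∂μ := by rw [integral_sub hWi hWsq, integral_const_mul, hnorm]
  have hjensen (k : ℕ) : (1 - c * ∫ x, W x ^ 2 ∂μ) ^ k ≤ ∫ x, W x * (1 - c * W x) ^ k ∂μ := by
    rw [← hmoment]
    have hmeas := hWi.aestronglyMeasurable
    refine pow_integral_mul_le_integral_mul_pow hW0 hWi hnorm (by fun_prop) ?_ k
    filter_upwards [hW0, hWc] with x hx0 hxc
    exact ⟨by linarith, by nlinarith [mul_nonneg hc.le hx0]⟩
  have hpointwise : ∀ᵐ x ∂μ, ∑ k ∈ Icc 1 n, 1 / (k : ℝ) * (W x * (1 - c * W x) ^ k)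
      ≤ -(W x * log (W x)) - log c * W x := by
    filter_upwards [hW0, hWc] with x hx0 hxc
    exact sum_Icc_one_div_mul_mul_one_sub_mul_pow_le hc hx0 hxc n
  calc log c + ∑ k ∈ Icc 1 n, 1 / (k : ℝ) * (1 - c * ∫ x, W x ^ 2 ∂μ) ^ k
      ≤ log c + ∑ k ∈ Icc 1 n, 1 / (k : ℝ) * ∫ x, W x * (1 - c * W x) ^ k ∂μ := by
        gcongr with k; exact hjensen k
    _ = log c + ∫ x, ∑ k ∈ Icc 1 n, 1 / (k : ℝ) * (W x * (1 - c * W x) ^ k) ∂μ := by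
        simp only [integral_finsetSum _ fun k _ => (hterm k).const_mul _, integral_const_mul]
    _ ≤ log c + ∫ x, -(W x * log (W x)) - log c * W x ∂μ := by
        gcongr 1
        exact integral_mono_ae (integrable_finsetSum _ fun k _ => (hterm k).const_mul _)
          (hlog.fun_neg.sub' (hWi.const_mul _)) hpointwise
    _ = -∫ x, W x * log (W x) ∂μ := by
        rw [integral_sub hlog.fun_neg (hWi.const_mul _), integral_neg, integral_const_mul, hnorm]
        ring

end Entropy

theorem wigner_entropy_purity_hierarchy (n : ℕ)
    (W : ℝ × ℝ → ℝ)
    (hpos : ∀ z, 0 ≤ W z)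
    (hnorm : ∫ z, W z = 1)
    (hbound : ∀ z, Real.pi * W z ≤ 1)
    (hlog : Integrable (fun z => W z * Real.log (W z)))
    (hpow : ∀ k : ℕ, 1 ≤ k → k ≤ n + 1 → Integrable (fun z => (W z) ^ k)) :
    (-∫ z, W z * Real.log (W z))
      ≥ Real.log Real.pi
        + ∑ k ∈ Finset.Icc 1 n,
            (1 / (k : ℝ)) * (1 - (2 * Real.pi * ∫ z, (W z) ^ 2) / 2) ^ k := by
  have hWi : Integrable W := by simpa using hpow 1 le_rfl (by omega)
  have hpurity : (2 * Real.pi * ∫ z, W z ^ 2) / 2 = Real.pi * ∫ z, W z ^ 2 := by ring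
  rw [ge_iff_le, hpurity]
  exact log_add_sum_le_neg_integral_mul_log pi_pos (ae_of_all _ hpos) (ae_of_all _ hbound) hWi
    hnorm hlog n
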